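/- Let p > 0, q > 0, V_th > 0 be real numbers, let z be a nonzero real number, and let c_in > 0 and c_out > 0 be real numbers. Define the Goldman–Hodgkin–Katz transmembrane current density as a function of the transmembrane voltage V by j(V) = p·z·q·(Be(−z·V/V_th)·c_in − Be(z·V/V_th)·c_out). Then j is a strictly increasing function of V, and j(V) = 0 if and only if V equals the Nernst potential (V_th/z)·log(c_out/c_in). In particular the equilibrium (reversal) voltage is unique. -/
import Mathlib

/-- The inverse Bernoulli function `Be(x) = x / (exp x - 1)`, with `Be 0 = 1`. -/
noncomputable def Be (x : ℝ) : ℝ := if x = 0 then 1 else x / (Real.exp x - 1)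

lemma exp_sub_one_ne_zero {x : ℝ} (hx : x ≠ 0) : Real.exp x - 1 ≠ 0 := by
  intro h
  have : Real.exp x = Real.exp 0 := by rw [Real.exp_zero]; linarith [sub_eq_zero.mp h]
  exact hx (Real.exp_injective this)

lemma Be_pos (x : ℝ) : 0 < Be x := by
  unfold Be
  rcases eq_or_ne x 0 with h | h
  · simp [h]
  · simp only [h, if_false]
    rcases lt_or_gt_of_ne h with hneg | hpos
    · have h1 : Real.exp x - 1 < 0 := by
        have := Real.exp_lt_one_iff.mpr hneg; linarith
      exact div_pos_of_neg_of_neg hneg h1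
    · have h1 : 0 < Real.exp x - 1 := by
        have := Real.one_lt_exp_iff.mpr hpos; linarith
      exact div_pos hpos h1

lemma Be_neg_eq (x : ℝ) : Be (-x) = Real.exp x * Be x := by
  rcases eq_or_ne x 0 with h | h
  · simp [h, Be]
  · have hnx : -x ≠ 0 := neg_ne_zero.mpr h
    have h1 : Real.exp x - 1 ≠ 0 := exp_sub_one_ne_zero h
    have h2 : Real.exp (-x) - 1 ≠ 0 := exp_sub_one_ne_zero hnx
    have hexp : Real.exp x ≠ 0 := (Real.exp_pos x).ne'
    simp only [Be, h, hnx, if_false]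
    have h3 : 1 - Real.exp x ≠ 0 := fun hc => h1 (by linarith)
    rw [Real.exp_neg] at h2 ⊢
    field_simp
    ring

lemma hasDerivAt_Be {x : ℝ} (hx : x ≠ 0) :
    HasDerivAt Be ((1 * (Real.exp x - 1) - x * Real.exp x) / (Real.exp x - 1) ^ 2) x := by
  have h1 : Real.exp x - 1 ≠ 0 := exp_sub_one_ne_zero hx
  have hd : HasDerivAt (fun y : ℝ => y / (Real.exp y - 1))
      ((1 * (Real.exp x - 1) - x * Real.exp x) / (Real.exp x - 1) ^ 2) x :=
    (hasDerivAt_id x).div ((Real.hasDerivAt_exp x).sub_const 1) h1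
  refine hd.congr_of_eventuallyEq ?_
  filter_upwards [isOpen_compl_singleton.mem_nhds (by simpa using hx)] with y hy
  simp only [Set.mem_compl_iff, Set.mem_singleton_iff] at hy
  simp [Be, hy]

lemma deriv_Be_neg {x : ℝ} (hx : x ≠ 0) : deriv Be x < 0 := by
  rw [(hasDerivAt_Be hx).deriv]
  have h1 : Real.exp x - 1 ≠ 0 := exp_sub_one_ne_zero hx
  have hnum : 1 * (Real.exp x - 1) - x * Real.exp x < 0 := by
    have key : Real.exp x * (1 - x) < 1 := by
      have h2 : -x + 1 < Real.exp (-x) := Real.add_one_lt_exp (neg_ne_zero.mpr hx)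
      have h3 : Real.exp x * (-x + 1) < Real.exp x * Real.exp (-x) :=
        mul_lt_mul_of_pos_left h2 (Real.exp_pos x)
      rw [← Real.exp_add] at h3
      simp only [add_neg_cancel, Real.exp_zero] at h3
      linarith
    nlinarith [Real.exp_pos x]
  exact div_neg_of_neg_of_pos hnum (by positivity)

lemma continuousAt_Be_zero : ContinuousAt Be 0 := by
  have hslope : Filter.Tendsto (fun y : ℝ => (Real.exp y - 1) / y)
      (nhdsWithin 0 {0}ᶜ) (nhds 1) := by
    have h := hasDerivAt_iff_tendsto_slope.mp (Real.hasDerivAt_exp 0)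
    rw [Real.exp_zero] at h
    refine Filter.Tendsto.congr' ?_ h
    filter_upwards [self_mem_nhdsWithin] with y hy
    simp [slope_def_field, div_eq_inv_mul, mul_comm]
  have hinv : Filter.Tendsto (fun y : ℝ => y / (Real.exp y - 1))
      (nhdsWithin 0 {0}ᶜ) (nhds 1) := by
    have h := hslope.inv₀ one_ne_zero
    simp only [inv_one] at h
    refine Filter.Tendsto.congr' ?_ h
    filter_upwards [self_mem_nhdsWithin] with y hy
    simp [inv_div]
  have hBe : Filter.Tendsto Be (nhdsWithin 0 {0}ᶜ) (nhds 1) := by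
    refine Filter.Tendsto.congr' ?_ hinv
    filter_upwards [self_mem_nhdsWithin] with y hy
    simp only [Set.mem_compl_iff, Set.mem_singleton_iff] at hy
    simp [Be, hy]
  unfold ContinuousAt
  rw [show Be 0 = 1 by simp [Be]]
  rw [← nhdsNE_sup_pure (0 : ℝ)]
  refine hBe.sup ?_
  have := tendsto_pure_nhds Be 0
  simpa [Be] using this

lemma continuousAt_Be (x : ℝ) : ContinuousAt Be x := by
  rcases eq_or_ne x 0 with h | h
  · rw [h]; exact continuousAt_Be_zero
  · exact (hasDerivAt_Be h).continuousAt

lemma Be_strictAnti : StrictAnti Be := by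
  have hIic : StrictAntiOn Be (Set.Iic 0) := by
    refine strictAntiOn_of_deriv_neg (convex_Iic 0)
      (fun y _ => (continuousAt_Be y).continuousWithinAt) ?_
    intro y hy
    rw [interior_Iic] at hy
    exact deriv_Be_neg (ne_of_lt hy)
  have hIci : StrictAntiOn Be (Set.Ici 0) := by
    refine strictAntiOn_of_deriv_neg (convex_Ici 0)
      (fun y _ => (continuousAt_Be y).continuousWithinAt) ?_
    intro y hy
    rw [interior_Ici] at hy
    exact deriv_Be_neg (ne_of_gt hy)
  intro a b hab
  rcases le_or_gt b 0 with hb | hb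
  · exact hIic (Set.mem_Iic.mpr (le_trans hab.le hb)) (Set.mem_Iic.mpr hb) hab
  · rcases le_or_gt 0 a with ha | ha
    · exact hIci (Set.mem_Ici.mpr ha) (Set.mem_Ici.mpr (le_trans ha hab.le)) hab
    · exact lt_trans (hIci (Set.mem_Ici.mpr le_rfl) (Set.mem_Ici.mpr hb.le) hb)
        (hIic (Set.mem_Iic.mpr ha.le) (Set.mem_Iic.mpr le_rfl) ha)

/-- The Goldman–Hodgkin–Katz transmembrane current density
`j(V) = p·z·q·(Be(−z·V/V_th)·c_in − Be(z·V/V_th)·c_out)` is strictly increasing in `V`,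
and vanishes exactly at the Nernst potential `(V_th/z)·log(c_out/c_in)`;
in particular the reversal voltage is unique. -/
theorem ghk_strictMono_and_nernst
    (p q V_th z c_in c_out : ℝ)
    (hp : 0 < p) (hq : 0 < q) (hV : 0 < V_th) (hz : z ≠ 0)
    (hin : 0 < c_in) (hout : 0 < c_out) :
    StrictMono (fun V : ℝ =>
      p * z * q * (Be (-(z * V / V_th)) * c_in - Be (z * V / V_th) * c_out)) ∧
    ∀ V : ℝ,
      p * z * q * (Be (-(z * V / V_th)) * c_in - Be (z * V / V_th) * c_out) = 0 ↔
        V = (V_th / z) * Real.log (c_out / c_in) := by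
  have hmono : StrictMono (fun u : ℝ => Be (-u) * c_in - Be u * c_out) := by
    intro a b hab
    have hBneg : Be (-b) > Be (-a) := Be_strictAnti (neg_lt_neg hab)
    have hB : Be b < Be a := Be_strictAnti hab
    have h1 := mul_lt_mul_of_pos_right hBneg hin
    have h2 := mul_lt_mul_of_pos_right hB hout
    dsimp only
    linarith
  have hj : StrictMono (fun V : ℝ =>
      p * z * q * (Be (-(z * V / V_th)) * c_in - Be (z * V / V_th) * c_out)) := by
    intro V1 V2 hV12
    dsimp only
    rcases lt_or_gt_of_ne hz with hzneg | hzpos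
    · have hu : z * V2 / V_th < z * V1 / V_th :=
        (div_lt_div_iff_of_pos_right hV).mpr (mul_lt_mul_of_neg_left hV12 hzneg)
      have := hmono hu
      have hpzq : p * z * q < 0 := mul_neg_of_neg_of_pos (mul_neg_of_pos_of_neg hp hzneg) hq
      dsimp only at this
      nlinarith
    · have hu : z * V1 / V_th < z * V2 / V_th :=
        (div_lt_div_iff_of_pos_right hV).mpr (mul_lt_mul_of_pos_left hV12 hzpos)
      have := hmono hu
      have hpzq : 0 < p * z * q := by positivity
      dsimp only at this
      nlinarith
  refine ⟨hj, ?_⟩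
  intro V
  set V0 := (V_th / z) * Real.log (c_out / c_in) with hV0
  have hjV0 : p * z * q * (Be (-(z * V0 / V_th)) * c_in - Be (z * V0 / V_th) * c_out) = 0 := by
    have hu0 : z * V0 / V_th = Real.log (c_out / c_in) := by
      rw [hV0]
      field_simp
    rw [hu0, Be_neg_eq, Real.exp_log (by positivity)]
    have : c_out / c_in * Be (Real.log (c_out / c_in)) * c_in
        = Be (Real.log (c_out / c_in)) * c_out := by
      field_simp
    rw [this]
    ring
  constructor
  · intro hjV
    by_contra hne
    rcases lt_or_gt_of_ne hne with h | h
    · have h2 := hj h; dsimp only at h2; rw [hjV, hjV0] at h2; exact lt_irrefl 0 h2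
    · have h2 := hj h; dsimp only at h2; rw [hjV, hjV0] at h2; exact lt_irrefl 0 h2
  · intro h; rw [h]; exact hjV0
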